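/- arXiv:2204.00607 — 9 statements merged into one kernel-verified Lean document; each statement's English description precedes it below -/
import Mathlib

section
/- The VC dimension of the class of affine halfspace classifiers on ℝ^d (functions of the form x ↦ sign(⟨w, x⟩ + b) with w ∈ ℝ^d, b ∈ ℝ) equals d + 1. That is: (i) there exists a set of d + 1 points in ℝ^d such that for every subset S of these points there exist w ∈ ℝ^d and b ∈ ℝ with ⟨w, x⟩ + b > 0 exactly for the points x in S; and (ii) for every set of d + 2 points in ℝ^d there is a subset S of these points such that no w ∈ ℝ^d and b ∈ ℝ satisfy ⟨w, x⟩ + b > 0 exactly for the points x in S. -/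
/-!
Lower bound: for an orthonormal basis `e` of `ℝ^d`, the points `0, e₁, …, e_d` are shattered,
since `w = ∑ ±eᵢ` and `b = ±1/2` prescribe the sign at each point independently.

Upper bound (Radon): `d + 2` points of `ℝ^d` satisfy a nontrivial affine relation
`∑ gₓ x = 0`, `∑ gₓ = 0`. If a halfspace `⟨w, ·⟩ + b > 0` cut out `{x | 0 < gₓ}`, then every term
of `∑ gₓ (⟨w, x⟩ + b)` would be nonnegative and one positive, yet the sum vanishes by the relation.
-/

open Finset

variable {V : Type*} [NormedAddCommGroup V] [InnerProductSpace ℝ V]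

def IsHalfspaceTrace (A S : Finset V) : Prop :=
  ∃ (w : V) (b : ℝ), ∀ x ∈ A, (0 < inner ℝ w x + b ↔ x ∈ S)

def ShatteredByHalfspaces (A : Finset V) : Prop :=
  ∀ S ⊆ A, IsHalfspaceTrace A S

section LowerBound

variable [DecidableEq V] {ι : Type*} [Fintype ι] {e : ι → V}

theorem Orthonormal.card_insert_zero_image (he : Orthonormal ℝ e) :
    (insert 0 (univ.image e)).card = Fintype.card ι + 1 := by
  rw [card_insert_of_notMem, card_image_of_injective _ he.linearIndependent.injective, card_univ]
  simpa [eq_comm] using he.ne_zero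

theorem Orthonormal.shatteredByHalfspaces_insert_zero_image (he : Orthonormal ℝ e) :
    ShatteredByHalfspaces (insert 0 (univ.image e)) := by
  intro S _
  refine ⟨∑ i, (if e i ∈ S then 1 else -1 : ℝ) • e i, if (0 : V) ∈ S then 1 / 2 else -1 / 2, ?_⟩
  simp only [mem_insert, mem_image, mem_univ, true_and]
  rintro x (rfl | ⟨i, rfl⟩)
  · rw [inner_zero_right, zero_add]
    split_ifs <;> norm_num [*]
  · rw [he.inner_left_fintype, conj_trivial]
    split_ifs <;> norm_num [*]

end LowerBound

section UpperBound

theorem sum_mul_inner_add_eq_zero {A : Finset V} {g : V → ℝ} (hvec : ∑ x ∈ A, g x • x = 0)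
    (hsum : ∑ x ∈ A, g x = 0) (w : V) (b : ℝ) :
    ∑ x ∈ A, g x * (inner ℝ w x + b) = 0 := by
  calc ∑ x ∈ A, g x * (inner ℝ w x + b)
      = inner ℝ w (∑ x ∈ A, g x • x) + (∑ x ∈ A, g x) * b := by
        simp only [inner_sum, real_inner_smul_right, sum_mul, ← sum_add_distrib, mul_add]
    _ = 0 := by rw [hvec, hsum, inner_zero_right, zero_mul, add_zero]

theorem not_isHalfspaceTrace_filter_pos_of_affine_relation {A : Finset V} {g : V → ℝ}
    (hvec : ∑ x ∈ A, g x • x = 0) (hsum : ∑ x ∈ A, g x = 0) (hpos : ∃ x ∈ A, 0 < g x) :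
    ¬ IsHalfspaceTrace A (A.filter (0 < g ·)) := by
  rintro ⟨w, b, hwb⟩
  have hcut : ∀ x ∈ A, (0 < inner ℝ w x + b ↔ 0 < g x) := fun x hx => by
    rw [hwb x hx, mem_filter, and_iff_right hx]
  have hterm_nonneg : ∀ x ∈ A, 0 ≤ g x * (inner ℝ w x + b) := fun x hx => by
    rcases le_or_gt (g x) 0 with hg | hg
    · exact mul_nonneg_of_nonpos_of_nonpos hg (not_lt.mp (mt (hcut x hx).mp hg.not_gt))
    · exact (mul_pos hg ((hcut x hx).mpr hg)).le
  obtain ⟨x₀, hx₀, hg₀⟩ := hpos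
  have := sum_pos' hterm_nonneg ⟨x₀, hx₀, mul_pos hg₀ ((hcut x₀ hx₀).mpr hg₀)⟩
  exact this.ne' (sum_mul_inner_add_eq_zero hvec hsum w b)

theorem exists_affine_relation_pos_of_finrank_add_one_lt_card [FiniteDimensional ℝ V] {A : Finset V}
    (hA : Module.finrank ℝ V + 1 < A.card) :
    ∃ g : V → ℝ, ∑ x ∈ A, g x • x = 0 ∧ ∑ x ∈ A, g x = 0 ∧ ∃ x ∈ A, 0 < g x := by
  obtain ⟨g, hvec, hsum, x, hx, hgx⟩ :=
    Module.exists_nontrivial_relation_sum_zero_of_finrank_succ_lt_card hA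
  rcases hgx.lt_or_gt with hneg | hpos
  · refine ⟨-g, ?_, ?_, x, hx, neg_pos.mpr hneg⟩
    · simp only [Pi.neg_apply, neg_smul, sum_neg_distrib, hvec, neg_zero]
    · simp only [Pi.neg_apply, sum_neg_distrib, hsum, neg_zero]
  · exact ⟨g, hvec, hsum, x, hx, hpos⟩

theorem not_shatteredByHalfspaces_of_finrank_add_one_lt_card [FiniteDimensional ℝ V]
    {A : Finset V} (hA : Module.finrank ℝ V + 1 < A.card) :
    ¬ ShatteredByHalfspaces A := by
  classical
  obtain ⟨g, hvec, hsum, hpos⟩ := exists_affine_relation_pos_of_finrank_add_one_lt_card hA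
  exact fun hA => not_isHalfspaceTrace_filter_pos_of_affine_relation hvec hsum hpos
    (hA _ (filter_subset _ A))

end UpperBound

/-- The VC dimension of affine halfspace classifiers on `ℝ^d` equals `d + 1`:
(i) some set of `d + 1` points is shattered by affine halfspaces, and
(ii) no set of `d + 2` points is shattered. -/
theorem vc_dimension_affine_halfspaces (d : ℕ) :
    (∃ A : Finset (EuclideanSpace ℝ (Fin d)), A.card = d + 1 ∧
      ∀ S ⊆ A, ∃ (w : EuclideanSpace ℝ (Fin d)) (b : ℝ),
        ∀ x ∈ A, (0 < inner ℝ w x + b ↔ x ∈ S)) ∧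
    (∀ A : Finset (EuclideanSpace ℝ (Fin d)), A.card = d + 2 →
      ∃ S ⊆ A, ¬ ∃ (w : EuclideanSpace ℝ (Fin d)) (b : ℝ),
        ∀ x ∈ A, (0 < inner ℝ w x + b ↔ x ∈ S)) := by
  classical
  have he := EuclideanSpace.orthonormal_single (𝕜 := ℝ) (ι := Fin d)
  refine ⟨⟨_, ?_, he.shatteredByHalfspaces_insert_zero_image⟩, fun A hA => ?_⟩
  · rw [he.card_insert_zero_image, Fintype.card_fin]
  · have hnot := not_shatteredByHalfspaces_of_finrank_add_one_lt_card (A := A)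
      (by rw [finrank_euclideanSpace_fin, hA]; omega)
    simpa only [ShatteredByHalfspaces, IsHalfspaceTrace, not_forall, exists_prop] using hnot
end

section
/- Let U_X, U_Y, U_Z be jointly independent random variables taking values in finite types, and define X := U_X, Y := f(X, U_Y), Z := g(Y, U_Z) for arbitrary functions f, g (a structural causal model for the chain X → Y → Z). Then X and Z are conditionally independent given Y: for all values x, y, z with P(Y = y) > 0, P(X = x, Z = z ∣ Y = y) = P(X = x ∣ Y = y) · P(Z = z ∣ Y = y). -/
open MeasureTheory ProbabilityTheory

/-- In the SCM for the chain `X → Y → Z` (with jointly independent finite-valued noises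
`U_X, U_Y, U_Z` and `X := U_X`, `Y := f(X, U_Y)`, `Z := g(Y, U_Z)`), the variables `X` and `Z`
are conditionally independent given `Y`. -/
theorem chain_scm_cond_indep
    {Ω : Type*} [MeasurableSpace Ω] (μ : Measure Ω) [IsProbabilityMeasure μ]
    {A B C D E : Type*} [Fintype A] [Fintype B] [Fintype C] [Fintype D] [Fintype E]
    [MeasurableSpace A] [MeasurableSingletonClass A]
    [MeasurableSpace B] [MeasurableSingletonClass B]
    [MeasurableSpace C] [MeasurableSingletonClass C]
    (UX : Ω → A) (UY : Ω → B) (UZ : Ω → C)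
    (hUX : Measurable UX) (hUY : Measurable UY) (hUZ : Measurable UZ)
    -- joint independence of the noise variables
    (hindep : ∀ (a : A) (b : B) (c : C),
      μ {ω | UX ω = a ∧ UY ω = b ∧ UZ ω = c}
        = μ {ω | UX ω = a} * μ {ω | UY ω = b} * μ {ω | UZ ω = c})
    (f : A → B → D) (g : D → C → E)
    (X : Ω → A) (Y : Ω → D) (Z : Ω → E)
    (hX : ∀ ω, X ω = UX ω) (hY : ∀ ω, Y ω = f (X ω) (UY ω)) (hZ : ∀ ω, Z ω = g (Y ω) (UZ ω)) :
    ∀ (x : A) (y : D) (z : E), 0 < μ {ω | Y ω = y} →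
      μ[|{ω | Y ω = y}] {ω | X ω = x ∧ Z ω = z}
        = μ[|{ω | Y ω = y}] {ω | X ω = x} * μ[|{ω | Y ω = y}] {ω | Z ω = z} := by
  classical
  intro x y z hpos
  set p : A → ENNReal := fun a => μ {ω | UX ω = a} with hp
  set q : B → ENNReal := fun b => μ {ω | UY ω = b} with hq
  set r : C → ENNReal := fun c => μ {ω | UZ ω = c} with hr'
  have meas1 : ∀ t : A × B × C,
      MeasurableSet {ω | UX ω = t.1 ∧ UY ω = t.2.1 ∧ UZ ω = t.2.2} := by
    rintro ⟨a, b, c⟩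
    have : {ω | UX ω = a ∧ UY ω = b ∧ UZ ω = c}
        = UX ⁻¹' {a} ∩ (UY ⁻¹' {b} ∩ UZ ⁻¹' {c}) := by
      ext ω; simp [Set.mem_preimage]
    rw [this]
    exact (hUX (measurableSet_singleton a)).inter
      ((hUY (measurableSet_singleton b)).inter (hUZ (measurableSet_singleton c)))
  have hdisj : ∀ (s : Finset (A × B × C)), (s : Set (A × B × C)).PairwiseDisjoint
      (fun t => {ω | UX ω = t.1 ∧ UY ω = t.2.1 ∧ UZ ω = t.2.2}) := by
    intro s
    rintro ⟨a, b, c⟩ _ ⟨a', b', c'⟩ _ hne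
    simp only [Function.onFun, Set.disjoint_left, Set.mem_setOf_eq]
    rintro ω ⟨h1, h2, h3⟩ ⟨h1', h2', h3'⟩
    apply hne
    simp only [Prod.mk.injEq]
    exact ⟨h1 ▸ h1'.symm ▸ rfl, h2 ▸ h2'.symm ▸ rfl, h3 ▸ h3'.symm ▸ rfl⟩
  have hsetP : ∀ (P : A → B → C → Prop),
      {ω | P (UX ω) (UY ω) (UZ ω)}
        = ⋃ t ∈ Finset.univ.filter (fun t : A × B × C => P t.1 t.2.1 t.2.2),
            {ω | UX ω = t.1 ∧ UY ω = t.2.1 ∧ UZ ω = t.2.2} := by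
    intro P
    ext ω
    simp only [Set.mem_setOf_eq, Set.mem_iUnion, Finset.mem_filter, Finset.mem_univ, true_and,
      exists_prop]
    constructor
    · intro h; exact ⟨(UX ω, UY ω, UZ ω), h, rfl, rfl, rfl⟩
    · rintro ⟨⟨a, b, c⟩, hP, rfl, rfl, rfl⟩; exact hP
  have measP : ∀ (P : A → B → C → Prop), MeasurableSet {ω | P (UX ω) (UY ω) (UZ ω)} := by
    intro P
    rw [hsetP P]
    exact Finset.measurableSet_biUnion _ (fun t _ => meas1 t)
  have key : ∀ (P : A → B → C → Prop),
      μ {ω | P (UX ω) (UY ω) (UZ ω)}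
        = ∑ a, ∑ b, ∑ c, if P a b c then p a * q b * r c else 0 := by
    intro P
    rw [hsetP P, measure_biUnion_finset (hdisj _) (fun t _ => meas1 t), Finset.sum_filter,
      Fintype.sum_prod_type]
    refine Finset.sum_congr rfl fun a _ => ?_
    rw [Fintype.sum_prod_type]
    refine Finset.sum_congr rfl fun b _ => Finset.sum_congr rfl fun c _ => ?_
    split_ifs with h
    · exact hindep a b c
    · rfl
  have hr1 : ∑ c, r c = 1 := by
    have huniv : (Set.univ : Set Ω) = ⋃ c ∈ (Finset.univ : Finset C), {ω | UZ ω = c} := by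
      ext ω; simp
    have hd : ((Finset.univ : Finset C) : Set C).PairwiseDisjoint (fun c => {ω | UZ ω = c}) := by
      intro c _ c' _ hne
      simp only [Function.onFun, Set.disjoint_left, Set.mem_setOf_eq]
      rintro ω rfl h
      exact hne h
    calc ∑ c, r c = μ (⋃ c ∈ (Finset.univ : Finset C), {ω | UZ ω = c}) :=
          (measure_biUnion_finset hd (fun c _ => hUZ (measurableSet_singleton c))).symm
      _ = 1 := by rw [← huniv, measure_univ]
  set Sa : A → ENNReal := fun a => ∑ b, if f a b = y then q b else 0 with hSa
  set Tz : ENNReal := ∑ c, if g y c = z then r c else 0 with hTzdef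
  set PY : ENNReal := ∑ a, p a * Sa a with hPYdef
  have comp : ∀ (P0 : A → B → C → Prop) (P : A → Prop) (Q : A → B → Prop) (R : C → Prop),
      (∀ a b c, P0 a b c ↔ (Q a b ∧ P a ∧ R c)) →
      (∑ a, ∑ b, ∑ c, if P0 a b c then p a * q b * r c else 0)
        = (∑ a, (if P a then p a else 0) * ∑ b, if Q a b then q b else 0)
            * (∑ c, if R c then r c else 0) := by
    intro P0 P Q R hiff
    have point : ∀ a b c, (if P0 a b c then p a * q b * r c else 0)
        = ((if P a then p a else 0) * (if Q a b then q b else 0)) * (if R c then r c else 0) := by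
      intro a b c
      by_cases h1 : P a <;> by_cases h2 : Q a b <;> by_cases h3 : R c <;>
        simp [hiff, h1, h2, h3, mul_comm, mul_assoc, mul_left_comm]
    simp only [point, Finset.sum_mul, Finset.mul_sum]
    refine Eq.trans (Finset.sum_congr rfl fun a _ => Finset.sum_comm) ?_
    exact Finset.sum_comm
  -- the four measure computations
  have e1 : μ {ω | Y ω = y} = PY := by
    have hset : {ω | Y ω = y}
        = {ω | f (UX ω) (UY ω) = y ∧ True ∧ True} := by
      ext ω; simp [hY, hX]
    rw [hset, key (fun a b _ => f a b = y ∧ True ∧ True),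
      comp _ (fun _ => True) (fun a b => f a b = y) (fun _ => True) (fun a b c => Iff.rfl)]
    simp [hr1, hPYdef, hSa]
  have e2 : μ ({ω | Y ω = y} ∩ {ω | X ω = x}) = p x * Sa x := by
    have hset : {ω | Y ω = y} ∩ {ω | X ω = x}
        = {ω | f (UX ω) (UY ω) = y ∧ UX ω = x ∧ True} := by
      ext ω; simp [hY, hX]
    rw [hset, key (fun a b _ => f a b = y ∧ a = x ∧ True),
      comp _ (fun a => a = x) (fun a b => f a b = y) (fun _ => True) (fun a b c => Iff.rfl)]
    simp [hr1, hSa, ite_mul, zero_mul, Finset.sum_ite_eq']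
  have e3 : μ ({ω | Y ω = y} ∩ {ω | Z ω = z}) = PY * Tz := by
    have hset : {ω | Y ω = y} ∩ {ω | Z ω = z}
        = {ω | f (UX ω) (UY ω) = y ∧ True ∧ g y (UZ ω) = z} := by
      ext ω
      simp only [Set.mem_inter_iff, Set.mem_setOf_eq, hY, hZ, hX, true_and]
      constructor
      · rintro ⟨h1, h3⟩; exact ⟨h1, by rw [h1] at h3; exact h3⟩
      · rintro ⟨h1, h3⟩; exact ⟨h1, by rw [h1]; exact h3⟩
    rw [hset, key (fun a b c => f a b = y ∧ True ∧ g y c = z),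
      comp _ (fun _ => True) (fun a b => f a b = y) (fun c => g y c = z) (fun a b c => Iff.rfl)]
    simp [hPYdef, hSa, hTzdef]
  have e4 : μ ({ω | Y ω = y} ∩ {ω | X ω = x ∧ Z ω = z}) = p x * Sa x * Tz := by
    have hset : {ω | Y ω = y} ∩ {ω | X ω = x ∧ Z ω = z}
        = {ω | f (UX ω) (UY ω) = y ∧ UX ω = x ∧ g y (UZ ω) = z} := by
      ext ω
      simp only [Set.mem_inter_iff, Set.mem_setOf_eq, hY, hZ, hX]
      constructor
      · rintro ⟨h1, h2, h3⟩; exact ⟨h1, h2, by rw [h1] at h3; exact h3⟩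
      · rintro ⟨h1, h2, h3⟩; exact ⟨h1, h2, by rw [h1]; exact h3⟩
    rw [hset, key (fun a b c => f a b = y ∧ a = x ∧ g y c = z),
      comp _ (fun a => a = x) (fun a b => f a b = y) (fun c => g y c = z) (fun a b c => Iff.rfl)]
    simp [hSa, hTzdef, ite_mul, zero_mul, Finset.sum_ite_eq']
  have hs : MeasurableSet {ω | Y ω = y} := by
    have hset : {ω | Y ω = y}
        = {ω | f (UX ω) (UY ω) = y} := by
      ext ω; simp [hY, hX]
    rw [hset]; exact measP (fun a b _ => f a b = y)
  rw [cond_apply hs μ, cond_apply hs μ, cond_apply hs μ, e1, e2, e3, e4]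
  have hPY0 : PY ≠ 0 := by rw [← e1]; exact hpos.ne'
  have hPYt : PY ≠ ⊤ := by rw [← e1]; exact measure_ne_top μ _
  rw [← mul_assoc PY⁻¹ PY Tz, ENNReal.inv_mul_cancel hPY0 hPYt, one_mul, ← mul_assoc]
end

section
/- Front-door adjustment: Let U_H, U_T, U_M, U_Y be jointly independent random variables taking values in finite types, and define H := h(U_H), T := f_T(H, U_T), M := f_M(T, U_M), Y := f_Y(M, H, U_Y) (so the hidden variable H confounds T and Y, and M mediates the entire effect of T on Y with M independent of H given T). Fix a value t of T and define the intervened variables M' := f_M(t, U_M), Y' := f_Y(M', H, U_Y) (modeling do(T := t)). Assume P(T = t', M = m) > 0 for all values t', m. Then for every y, P(Y' = y) = Σ_m P(M = m ∣ T = t) · Σ_{t'} P(T = t') · P(Y = y ∣ M = m, T = t'). -/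
/-!
`H` and `T` are functions of `(UH, UT)`, so the mediator noise `UM` is independent of
`(H, T, UY)`, and every event in the formula is decided by `UM` and `(H, T, UY)`. Independence
factors `P(T = t', M = m) = P(T = t') P(fM t' UM = m)` and
`P(M = m, T = t', Y = y) = P(fM t' UM = m) P(T = t', fY m H UY = y)`. Hence
`P(M = m ∣ T = t) = P(fM t UM = m)` and
`P(T = t') P(Y = y ∣ M = m, T = t') = P(T = t', fY m H UY = y)`, which sums over `t'` to
`P(fY m H UY = y)`. Splitting `Y'` along the values of `M' = fM t UM` gives the same sum
`Σ_m P(fM t UM = m) P(fY m H UY = y)`.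
-/

open MeasureTheory ProbabilityTheory

section Independence

variable {Ω : Type*} [MeasurableSpace Ω] {μ : Measure Ω}

lemma sum_measure_preimage_singleton_inter {α : Type*} [Fintype α] [MeasurableSpace α]
    [MeasurableSingletonClass α] {X : Ω → α} (hX : Measurable X) (E : Set Ω) :
    ∑ a, μ (X ⁻¹' {a} ∩ E) = μ E := by
  simpa [Measure.restrict_apply (hX (measurableSet_singleton _))] using
    sum_measure_preimage_singleton (μ := μ.restrict E) Finset.univ
      fun a _ ↦ hX (measurableSet_singleton a)

lemma indepFun_of_measure_inter_preimage_singleton {α β : Type*}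
    [MeasurableSpace α] [MeasurableSingletonClass α] [Countable α]
    [MeasurableSpace β] [MeasurableSingletonClass β] [Countable β] [IsFiniteMeasure μ]
    {X : Ω → α} {Z : Ω → β} (hX : Measurable X) (hZ : Measurable Z)
    (h : ∀ a b, μ (X ⁻¹' {a} ∩ Z ⁻¹' {b}) = μ (X ⁻¹' {a}) * μ (Z ⁻¹' {b})) :
    IndepFun X Z μ := by
  rw [indepFun_iff_map_prod_eq_prod_map_map hX.aemeasurable hZ.aemeasurable]
  refine Measure.ext_of_singleton fun ⟨a, b⟩ ↦ ?_
  rw [← Set.singleton_prod_singleton, Measure.prod_prod, Measure.map_apply (hX.prodMk hZ)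
    (.of_discrete), Measure.map_apply hX (.singleton a), Measure.map_apply hZ (.singleton b),
    Set.mk_preimage_prod]
  exact h a b

lemma indepFun_of_measure_eq_mul₄ [IsProbabilityMeasure μ] {α β γ δ : Type*}
    [MeasurableSpace α] [MeasurableSingletonClass α] [Countable α]
    [MeasurableSpace β] [MeasurableSingletonClass β] [Countable β]
    [MeasurableSpace γ] [MeasurableSingletonClass γ] [Fintype γ]
    [MeasurableSpace δ] [MeasurableSingletonClass δ] [Countable δ]
    {W : Ω → α} {X : Ω → β} {U : Ω → γ} {Z : Ω → δ}
    (hW : Measurable W) (hX : Measurable X) (hU : Measurable U) (hZ : Measurable Z)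
    (h : ∀ w x u z, μ {ω | W ω = w ∧ X ω = x ∧ U ω = u ∧ Z ω = z}
      = μ {ω | W ω = w} * μ {ω | X ω = x} * μ {ω | U ω = u} * μ {ω | Z ω = z}) :
    IndepFun U (fun ω ↦ (W ω, X ω, Z ω)) μ := by
  have hU_total : ∑ u, μ {ω | U ω = u} = 1 := by
    rw [← measure_univ (μ := μ), ← sum_measure_preimage_singleton_inter hU]
    simp only [Set.inter_univ]
    rfl
  have h_marginal : ∀ w x z, μ {ω | W ω = w ∧ X ω = x ∧ Z ω = z}
      = μ {ω | W ω = w} * μ {ω | X ω = x} * μ {ω | Z ω = z} := by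
    intro w x z
    rw [← sum_measure_preimage_singleton_inter hU]
    calc ∑ u, μ (U ⁻¹' {u} ∩ {ω | W ω = w ∧ X ω = x ∧ Z ω = z})
        = ∑ u, μ {ω | W ω = w} * μ {ω | X ω = x} * μ {ω | U ω = u}
            * μ {ω | Z ω = z} := by
          refine Finset.sum_congr rfl fun u _ ↦ ?_
          rw [← h]
          congr 1
          ext ω
          simp only [Set.mem_inter_iff, Set.mem_preimage, Set.mem_singleton_iff,
            Set.mem_ofPred_eq]
          tauto
      _ = _ := by rw [← Finset.sum_mul, ← Finset.mul_sum, hU_total, mul_one]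
  refine indepFun_of_measure_inter_preimage_singleton hU (hW.prodMk (hX.prodMk hZ)) ?_
  rintro u ⟨w, x, z⟩
  have hset : U ⁻¹' {u} ∩ (fun ω ↦ (W ω, X ω, Z ω)) ⁻¹' {(w, x, z)}
      = {ω | W ω = w ∧ X ω = x ∧ U ω = u ∧ Z ω = z} := by
    ext ω
    simp only [Set.mem_inter_iff, Set.mem_preimage, Set.mem_singleton_iff, Prod.mk.injEq,
      Set.mem_ofPred_eq]
    tauto
  have hset' : (fun ω ↦ (W ω, X ω, Z ω)) ⁻¹' {(w, x, z)}
      = {ω | W ω = w ∧ X ω = x ∧ Z ω = z} := by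
    ext ω
    simp
  rw [hset, hset', h, h_marginal]
  simp only [Set.preimage, Set.mem_singleton_iff]
  ring

end Independence

section FrontDoor

variable {Ω : Type*} [MeasurableSpace Ω] {μ : Measure Ω}
  {AH AT AM AY BM BY : Type*}
  [MeasurableSpace AH] [MeasurableSingletonClass AH] [Countable AH]
  [MeasurableSpace AT] [MeasurableSingletonClass AT] [Countable AT]
  [MeasurableSpace BY] [MeasurableSingletonClass BY] [Countable BY]
  [MeasurableSpace BM] [MeasurableSingletonClass BM] [Countable BM]
  {H : Ω → AH} {T : Ω → AT} {M : Ω → AM} {Y : Ω → AY} {UM : Ω → BM} {UY : Ω → BY}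
  {fM : AT → BM → AM} {fY : AM → AH → BY → AY}

lemma measure_treatment_and_mediator (hind : IndepFun UM (fun ω ↦ (H ω, T ω, UY ω)) μ)
    (hM : ∀ ω, M ω = fM (T ω) (UM ω)) (t' : AT) (m : AM) :
    μ {ω | T ω = t' ∧ M ω = m} = μ {ω | T ω = t'} * μ {ω | fM t' (UM ω) = m} := by
  have hset : {ω | T ω = t' ∧ M ω = m}
      = UM ⁻¹' {u | fM t' u = m}
        ∩ (fun ω ↦ (H ω, T ω, UY ω)) ⁻¹' {x | x.2.1 = t'} := by
    ext ω
    simp only [Set.mem_ofPred_eq, Set.mem_inter_iff, Set.mem_preimage, hM]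
    grind
  rw [hset, hind.measure_inter_preimage_eq_mul _ _ .of_discrete .of_discrete, mul_comm]
  rfl

lemma measure_mediator_and_treatment_inter_outcome
    (hind : IndepFun UM (fun ω ↦ (H ω, T ω, UY ω)) μ)
    (hM : ∀ ω, M ω = fM (T ω) (UM ω)) (hY : ∀ ω, Y ω = fY (M ω) (H ω) (UY ω))
    (t' : AT) (m : AM) (y : AY) :
    μ ({ω | M ω = m ∧ T ω = t'} ∩ {ω | Y ω = y})
      = μ {ω | fM t' (UM ω) = m} * μ {ω | T ω = t' ∧ fY m (H ω) (UY ω) = y} := by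
  have hset : {ω | M ω = m ∧ T ω = t'} ∩ {ω | Y ω = y}
      = UM ⁻¹' {u | fM t' u = m}
        ∩ (fun ω ↦ (H ω, T ω, UY ω)) ⁻¹' {x | x.2.1 = t' ∧ fY m x.1 x.2.2 = y} := by
    ext ω
    simp only [Set.mem_ofPred_eq, Set.mem_inter_iff, Set.mem_preimage, hY, hM]
    grind
  rw [hset, hind.measure_inter_preimage_eq_mul _ _ .of_discrete .of_discrete]
  rfl

lemma measure_intervened_outcome [Fintype AM] [MeasurableSpace AM]
    [MeasurableSingletonClass AM] (hind : IndepFun UM (fun ω ↦ (H ω, T ω, UY ω)) μ)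
    (hUM : Measurable UM) (t : AT) {M' : Ω → AM} {Y' : Ω → AY}
    (hM' : ∀ ω, M' ω = fM t (UM ω)) (hY' : ∀ ω, Y' ω = fY (M' ω) (H ω) (UY ω))
    (y : AY) :
    μ {ω | Y' ω = y}
      = ∑ m, μ {ω | fM t (UM ω) = m} * μ {ω | fY m (H ω) (UY ω) = y} := by
  have hM'_meas : Measurable M' := by
    rw [funext hM']; exact (Measurable.of_discrete (f := fM t)).comp hUM
  rw [← sum_measure_preimage_singleton_inter hM'_meas]
  refine Finset.sum_congr rfl fun m _ ↦ ?_
  have hset : M' ⁻¹' {m} ∩ {ω | Y' ω = y}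
      = UM ⁻¹' {u | fM t u = m}
        ∩ (fun ω ↦ (H ω, T ω, UY ω)) ⁻¹' {x | fY m x.1 x.2.2 = y} := by
    ext ω
    simp only [Set.mem_ofPred_eq, Set.mem_inter_iff, Set.mem_preimage, Set.mem_singleton_iff,
      hY', hM']
    grind
  rw [hset, hind.measure_inter_preimage_eq_mul _ _ .of_discrete .of_discrete]
  rfl

lemma cond_mediator_of_treatment [IsFiniteMeasure μ]
    (hind : IndepFun UM (fun ω ↦ (H ω, T ω, UY ω)) μ) (hM : ∀ ω, M ω = fM (T ω) (UM ω))
    (hT : Measurable T) {t : AT} (ht : μ {ω | T ω = t} ≠ 0) (m : AM) :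
    μ[{ω | M ω = m} | {ω | T ω = t}] = μ {ω | fM t (UM ω) = m} := by
  have hTt : MeasurableSet {ω | T ω = t} := hT (measurableSet_singleton t)
  rw [cond_apply hTt, ← Set.ofPred_and, measure_treatment_and_mediator hind hM,
    ENNReal.inv_mul_cancel_left ht (measure_ne_top _ _)]

lemma measure_treatment_mul_cond_outcome [IsFiniteMeasure μ] [MeasurableSpace AM]
    [MeasurableSingletonClass AM]
    (hind : IndepFun UM (fun ω ↦ (H ω, T ω, UY ω)) μ) (hUM : Measurable UM)
    (hT : Measurable T) (hM : ∀ ω, M ω = fM (T ω) (UM ω))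
    (hY : ∀ ω, Y ω = fY (M ω) (H ω) (UY ω))
    {t' : AT} {m : AM} (hpos : μ {ω | T ω = t' ∧ M ω = m} ≠ 0) (y : AY) :
    μ {ω | T ω = t'} * μ[{ω | Y ω = y} | {ω | M ω = m ∧ T ω = t'}]
      = μ {ω | T ω = t' ∧ fY m (H ω) (UY ω) = y} := by
  have hM_meas : Measurable M := by
    rw [funext hM]
    exact (Measurable.of_discrete (f := fun p : AT × BM ↦ fM p.1 p.2)).comp (hT.prodMk hUM)
  have hMT : MeasurableSet {ω | M ω = m ∧ T ω = t'} :=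
    (hM_meas (measurableSet_singleton m)).inter (hT (measurableSet_singleton t'))
  have hsplit :
      μ {ω | M ω = m ∧ T ω = t'} = μ {ω | T ω = t'} * μ {ω | fM t' (UM ω) = m} := by
    simp_rw [and_comm (a := M _ = m), measure_treatment_and_mediator hind hM]
  have hq : μ {ω | fM t' (UM ω) = m} ≠ 0 :=
    right_ne_zero_of_mul (measure_treatment_and_mediator hind hM t' m ▸ hpos)
  have hinter := cond_mul_eq_inter hMT {ω | Y ω = y} μ
  rw [measure_mediator_and_treatment_inter_outcome hind hM hY, hsplit] at hinter
  rw [← ENNReal.mul_right_inj hq (measure_ne_top _ _), ← hinter]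
  ring

theorem measure_intervened_outcome_eq_frontDoor [IsFiniteMeasure μ] [Fintype AT] [Fintype AM]
    [MeasurableSpace AM] [MeasurableSingletonClass AM]
    (hind : IndepFun UM (fun ω ↦ (H ω, T ω, UY ω)) μ) (hUM : Measurable UM)
    (hT : Measurable T) (hM : ∀ ω, M ω = fM (T ω) (UM ω))
    (hY : ∀ ω, Y ω = fY (M ω) (H ω) (UY ω))
    (t : AT) {M' : Ω → AM} {Y' : Ω → AY}
    (hM' : ∀ ω, M' ω = fM t (UM ω)) (hY' : ∀ ω, Y' ω = fY (M' ω) (H ω) (UY ω))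
    (hpos : ∀ t' m, μ {ω | T ω = t' ∧ M ω = m} ≠ 0) (y : AY) :
    μ {ω | Y' ω = y}
      = ∑ m, μ[{ω | M ω = m} | {ω | T ω = t}] *
          ∑ t', μ {ω | T ω = t'} * μ[{ω | Y ω = y} | {ω | M ω = m ∧ T ω = t'}] := by
  rw [measure_intervened_outcome hind hUM t hM' hY']
  refine Finset.sum_congr rfl fun m _ ↦ ?_
  have ht : μ {ω | T ω = t} ≠ 0 :=
    left_ne_zero_of_mul (measure_treatment_and_mediator hind hM t m ▸ hpos t m)
  rw [cond_mediator_of_treatment hind hM hT ht, Finset.sum_congr rfl fun t' _ ↦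
    measure_treatment_mul_cond_outcome hind hUM hT hM hY (hpos t' m) y]
  exact congrArg _ (sum_measure_preimage_singleton_inter hT _).symm

end FrontDoor

theorem front_door_adjustment_general
    {Ω : Type*} [MeasurableSpace Ω] (μ : Measure Ω) [IsProbabilityMeasure μ]
    {BH BT BM BY AH AT AM AY : Type*}
    [Fintype BH] [Fintype BT] [Fintype BM] [Fintype BY]
    [Fintype AH] [Fintype AT] [Fintype AM]
    [MeasurableSpace BH] [MeasurableSingletonClass BH]
    [MeasurableSpace BT] [MeasurableSingletonClass BT]
    [MeasurableSpace BM] [MeasurableSingletonClass BM]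
    [MeasurableSpace BY] [MeasurableSingletonClass BY]
    (UH : Ω → BH) (UT : Ω → BT) (UM : Ω → BM) (UY : Ω → BY)
    (hUH : Measurable UH) (hUT : Measurable UT) (hUM : Measurable UM) (hUY : Measurable UY)
    -- joint independence of the noise variables
    (hindep : ∀ (bH : BH) (bT : BT) (bM : BM) (bY : BY),
      μ {ω | UH ω = bH ∧ UT ω = bT ∧ UM ω = bM ∧ UY ω = bY}
        = μ {ω | UH ω = bH} * μ {ω | UT ω = bT} * μ {ω | UM ω = bM} * μ {ω | UY ω = bY})
    (h : BH → AH) (fT : AH → BT → AT) (fM : AT → BM → AM) (fY : AM → AH → BY → AY)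
    (H : Ω → AH) (T : Ω → AT) (M : Ω → AM) (Y : Ω → AY)
    (hH : ∀ ω, H ω = h (UH ω)) (hT : ∀ ω, T ω = fT (H ω) (UT ω))
    (hM : ∀ ω, M ω = fM (T ω) (UM ω)) (hY : ∀ ω, Y ω = fY (M ω) (H ω) (UY ω))
    -- the intervention do(T := t)
    (t : AT) (M' : Ω → AM) (Y' : Ω → AY)
    (hM' : ∀ ω, M' ω = fM t (UM ω)) (hY' : ∀ ω, Y' ω = fY (M' ω) (H ω) (UY ω))
    -- positivity
    (hpos : ∀ (t' : AT) (m : AM), μ {ω | T ω = t' ∧ M ω = m} ≠ 0) :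
    ∀ y : AY,
      μ {ω | Y' ω = y}
        = ∑ m : AM, μ[|{ω | T ω = t}] {ω | M ω = m} *
            ∑ t' : AT, μ {ω | T ω = t'} *
              μ[|{ω | M ω = m ∧ T ω = t'}] {ω | Y ω = y} := by
  -- the value types of `H`, `T`, `M` carry no σ-algebra; give them the discrete one
  let : MeasurableSpace AH := ⊤
  let : MeasurableSpace AT := ⊤
  let : MeasurableSpace AM := ⊤
  have hH_meas : Measurable H := by
    rw [funext hH]; exact Measurable.of_discrete.comp hUH
  have hT_meas : Measurable T := by
    rw [funext hT]
    exact (Measurable.of_discrete (f := fun p : AH × BT ↦ fT p.1 p.2)).comp (hH_meas.prodMk hUT)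
  have hind : IndepFun UM (fun ω ↦ (H ω, T ω, UY ω)) μ := by
    have hfactor : (fun ω ↦ (H ω, T ω, UY ω))
        = (fun x : BH × BT × BY ↦ (h x.1, fT (h x.1) x.2.1, x.2.2))
          ∘ fun ω ↦ (UH ω, UT ω, UY ω) := by
      funext ω
      simp [hT, hH]
    rw [hfactor]
    exact (indepFun_of_measure_eq_mul₄ hUH hUT hUM hUY hindep).comp measurable_id .of_discrete
  exact measure_intervened_outcome_eq_frontDoor hind hUM hT_meas hM hY t hM' hY' hpos

/-- Front-door adjustment: in the SCM `H := h(U_H)`, `T := f_T(H, U_T)`, `M := f_M(T, U_M)`,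
`Y := f_Y(M, H, U_Y)` with jointly independent finite-valued noises (the hidden variable `H`
confounds `T` and `Y`, and `M` mediates the whole effect of `T` on `Y`), the interventional
distribution of `Y` under `do(T := t)` is
`P(Y' = y) = Σ_m P(M = m ∣ T = t) · Σ_{t'} P(T = t') · P(Y = y ∣ M = m, T = t')`. -/
theorem front_door_adjustment
    {Ω : Type*} [MeasurableSpace Ω] (μ : Measure Ω) [IsProbabilityMeasure μ]
    {BH BT BM BY AH AT AM AY : Type*}
    [Fintype BH] [Fintype BT] [Fintype BM] [Fintype BY]
    [Fintype AH] [Fintype AT] [Fintype AM] [Fintype AY]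
    [MeasurableSpace BH] [MeasurableSingletonClass BH]
    [MeasurableSpace BT] [MeasurableSingletonClass BT]
    [MeasurableSpace BM] [MeasurableSingletonClass BM]
    [MeasurableSpace BY] [MeasurableSingletonClass BY]
    (UH : Ω → BH) (UT : Ω → BT) (UM : Ω → BM) (UY : Ω → BY)
    (hUH : Measurable UH) (hUT : Measurable UT) (hUM : Measurable UM) (hUY : Measurable UY)
    -- joint independence of the noise variables
    (hindep : ∀ (bH : BH) (bT : BT) (bM : BM) (bY : BY),
      μ {ω | UH ω = bH ∧ UT ω = bT ∧ UM ω = bM ∧ UY ω = bY}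
        = μ {ω | UH ω = bH} * μ {ω | UT ω = bT} * μ {ω | UM ω = bM} * μ {ω | UY ω = bY})
    (h : BH → AH) (fT : AH → BT → AT) (fM : AT → BM → AM) (fY : AM → AH → BY → AY)
    (H : Ω → AH) (T : Ω → AT) (M : Ω → AM) (Y : Ω → AY)
    (hH : ∀ ω, H ω = h (UH ω)) (hT : ∀ ω, T ω = fT (H ω) (UT ω))
    (hM : ∀ ω, M ω = fM (T ω) (UM ω)) (hY : ∀ ω, Y ω = fY (M ω) (H ω) (UY ω))
    -- the intervention do(T := t)
    (t : AT) (M' : Ω → AM) (Y' : Ω → AY)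
    (hM' : ∀ ω, M' ω = fM t (UM ω)) (hY' : ∀ ω, Y' ω = fY (M' ω) (H ω) (UY ω))
    -- positivity
    (hpos : ∀ (t' : AT) (m : AM), μ {ω | T ω = t' ∧ M ω = m} ≠ 0) :
    ∀ y : AY,
      μ {ω | Y' ω = y}
        = ∑ m : AM, μ[|{ω | T ω = t}] {ω | M ω = m} *
            ∑ t' : AT, μ {ω | T ω = t'} *
              μ[|{ω | M ω = m ∧ T ω = t'}] {ω | Y ω = y} :=
  front_door_adjustment_general μ UH UT UM UY hUH hUT hUM hUY hindep h fT fM fY H T M Y hH hT hM hY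
    t M' Y' hM' hY' hpos
end

section
/- Propensity score balancing (Rosenbaum–Rubin): Let Z be a random variable taking values in a finite type and T a {0,1}-valued random variable on the same probability space, and define the propensity score s(z) := P(T = 1 ∣ Z = z) for each z with P(Z = z) > 0. Then T and Z are conditionally independent given s(Z): for every p in the range of s with P(s(Z) = p) > 0 and every value z, P(T = 1, Z = z ∣ s(Z) = p) = P(T = 1 ∣ s(Z) = p) · P(Z = z ∣ s(Z) = p). -/
open MeasureTheory ProbabilityTheory
open scoped ENNReal

/-- Propensity score balancing (Rosenbaum–Rubin): for a finite-valued covariate `Z` and a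
`{0,1}`-valued treatment `T`, with propensity score `s(z) := P(T = 1 ∣ Z = z)`, the
treatment `T` and the covariate `Z` are conditionally independent given `s(Z)`. -/
theorem propensity_score_balancing
    {Ω : Type*} [MeasurableSpace Ω] (μ : Measure Ω) [IsProbabilityMeasure μ]
    {ZT : Type*} [Fintype ZT] [MeasurableSpace ZT] [MeasurableSingletonClass ZT]
    (Z : Ω → ZT) (T : Ω → ℕ) (hZ : Measurable Z) (hT : Measurable T)
    (hT01 : ∀ ω, T ω = 0 ∨ T ω = 1)
    (s : ZT → ℝ≥0∞) (hs : ∀ z : ZT, s z = μ[|{ω | Z ω = z}] {ω | T ω = 1}) :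
    ∀ p ∈ Set.range s, μ {ω | s (Z ω) = p} ≠ 0 →
      ∀ z : ZT,
        μ[|{ω | s (Z ω) = p}] {ω | T ω = 1 ∧ Z ω = z}
          = μ[|{ω | s (Z ω) = p}] {ω | T ω = 1} * μ[|{ω | s (Z ω) = p}] {ω | Z ω = z} := by
  classical
  intro p hp hA0 z
  set A : Set Ω := {ω | s (Z ω) = p} with hAdef
  have hZT : ∀ w : ZT, MeasurableSet {ω | Z ω = w} :=
    fun w => hZ (measurableSet_singleton w)
  have hAmeas : MeasurableSet A := hZ ((Set.toFinite {w : ZT | s w = p}).measurableSet)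
  have hAne : μ A ≠ ∞ := (measure_lt_top μ A).ne
  have key : ∀ w : ZT, μ ({ω | T ω = 1} ∩ {ω | Z ω = w}) = s w * μ {ω | Z ω = w} := by
    intro w
    by_cases h0 : μ {ω | Z ω = w} = 0
    · rw [h0, mul_zero, measure_mono_null Set.inter_subset_right h0]
    · rw [hs w, ProbabilityTheory.cond_apply (hZT w),
        Set.inter_comm {ω | T ω = 1}, mul_right_comm,
        ENNReal.inv_mul_cancel h0 (measure_ne_top μ _), one_mul]
  set F : Finset ZT := Finset.univ.filter (fun w => s w = p) with hF
  have hdisj : (↑F : Set ZT).PairwiseDisjoint (fun w => {ω | Z ω = w}) := by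
    intro a _ b _ hab
    refine Set.disjoint_left.2 fun ω ha hb => hab ?_
    simp only [Set.mem_setOf_eq] at ha hb
    rw [← ha, hb]
  have hAeq : A = ⋃ w ∈ F, {ω | Z ω = w} := by
    ext ω
    simp only [hAdef, Set.mem_setOf_eq, Set.mem_iUnion, hF, Finset.mem_filter,
      Finset.mem_univ, true_and, exists_prop]
    constructor
    · intro h; exact ⟨Z ω, h, rfl⟩
    · rintro ⟨w, hw, rfl⟩; exact hw
  have hmuA : μ A = ∑ w ∈ F, μ {ω | Z ω = w} := by
    rw [hAeq, measure_biUnion_finset hdisj (fun w _ => hZT w)]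
  have hTA : μ ({ω | T ω = 1} ∩ A) = p * μ A := by
    have hsplit : {ω | T ω = 1} ∩ A = ⋃ w ∈ F, ({ω | T ω = 1} ∩ {ω | Z ω = w}) := by
      rw [hAeq, Set.inter_iUnion₂]
    rw [hsplit, measure_biUnion_finset (f := fun w => {ω | T ω = 1} ∩ {ω | Z ω = w})
      (hdisj.mono fun w => Set.inter_subset_right)
      (fun w _ => ((hT (measurableSet_singleton 1)).inter (hZT w) :
        MeasurableSet ({ω | T ω = 1} ∩ {ω | Z ω = w}))), hmuA, Finset.mul_sum]
    refine Finset.sum_congr rfl fun w hw => ?_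
    rw [key w, (Finset.mem_filter.1 hw).2]
  rw [ProbabilityTheory.cond_apply hAmeas, ProbabilityTheory.cond_apply hAmeas,
    ProbabilityTheory.cond_apply hAmeas]
  by_cases hzp : s z = p
  · have h1 : A ∩ {ω | T ω = 1 ∧ Z ω = z} = {ω | T ω = 1} ∩ {ω | Z ω = z} := by
      ext ω
      simp only [hAdef, Set.mem_inter_iff, Set.mem_setOf_eq]
      constructor
      · rintro ⟨_, h, h'⟩; exact ⟨h, h'⟩
      · rintro ⟨h, h'⟩; exact ⟨by rw [h', hzp], h, h'⟩
    have h2 : A ∩ {ω | Z ω = z} = {ω | Z ω = z} := by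
      ext ω
      simp only [hAdef, Set.mem_inter_iff, Set.mem_setOf_eq, and_iff_right_iff_imp]
      intro h'; rw [h', hzp]
    rw [h1, h2, key z, hzp, Set.inter_comm A, hTA]
    rw [show (μ A)⁻¹ * (p * μ A) = p by
      rw [mul_comm p, ← mul_assoc, ENNReal.inv_mul_cancel hA0 hAne, one_mul]]
    ring
  · have h1 : A ∩ {ω | T ω = 1 ∧ Z ω = z} = ∅ := by
      ext ω
      simp only [hAdef, Set.mem_inter_iff, Set.mem_setOf_eq, Set.mem_empty_iff_false,
        iff_false, not_and]
      rintro hpa _ hz; exact hzp (by rw [← hz]; exact hpa)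
    have h2 : A ∩ {ω | Z ω = z} = ∅ := by
      ext ω
      simp only [hAdef, Set.mem_inter_iff, Set.mem_setOf_eq, Set.mem_empty_iff_false,
        iff_false, not_and]
      intro hpa hz; exact hzp (by rw [← hz]; exact hpa)
    rw [h1, h2, measure_empty]
    simp
end

section
/- Unbiasedness of inverse probability weighting: Let X be a random variable taking values in a finite type, T a {0,1}-valued treatment variable, and Y(0), Y(1) integrable real-valued potential outcomes, all on a common probability space, with observed outcome Y := T·Y(1) + (1 − T)·Y(0). Assume that for every x with P(X = x) > 0 the pair (Y(0), Y(1)) is conditionally independent of T given X = x (ignorability) and 0 < P(T = 1 ∣ X = x) < 1 (overlap). Let s(x) := P(T = 1 ∣ X = x). Then E[ T·Y / s(X) ] = E[ Y(1) ]. -/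
open MeasureTheory ProbabilityTheory
open scoped ENNReal

/-!
On each stratum `{X = x}` of positive probability the conditional law makes `T` independent of
`Y(1)`, so `E[T·Y(1) ∣ X = x] = s(x)·E[Y(1) ∣ X = x]`; since `T·Y = T·Y(1)`, dividing by the
propensity score `s(x) > 0` recovers `E[Y(1) ∣ X = x]`. Summing the strata, which partition the
sample space because `X` takes finitely many values, gives the claim.
-/

section

variable {Ω : Type*} [MeasurableSpace Ω]

lemma integral_eq_measureReal_of_zero_or_one (ν : Measure Ω) {T : Ω → ℝ} (hT : Measurable T)
    (hT01 : ∀ ω, T ω = 0 ∨ T ω = 1) :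
    ∫ ω, T ω ∂ν = ν.real {ω | T ω = 1} := by
  have hT_eq : T = {ω | T ω = 1}.indicator 1 := by
    funext ω
    rcases hT01 ω with h | h <;> simp [h]
  calc ∫ ω, T ω ∂ν = ∫ ω, {ω | T ω = 1}.indicator 1 ω ∂ν := by rw [← hT_eq]
    _ = ν.real {ω | T ω = 1} := integral_indicator_one (hT (measurableSet_singleton 1))

lemma integral_mul_div_measureReal_eq_of_indepFun {ν : Measure Ω} {T Y : Ω → ℝ}
    (hind : IndepFun T Y ν) (hT : Measurable T) (hT01 : ∀ ω, T ω = 0 ∨ T ω = 1)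
    (hY : AEStronglyMeasurable Y ν) (hpos : ν.real {ω | T ω = 1} ≠ 0) :
    ∫ ω, T ω * Y ω / ν.real {ω | T ω = 1} ∂ν = ∫ ω, Y ω ∂ν := by
  rw [integral_div, hind.integral_fun_mul_eq_mul_integral hT.aestronglyMeasurable hY,
    integral_eq_measureReal_of_zero_or_one ν hT hT01, mul_div_cancel_left₀ _ hpos]

lemma setIntegral_eq_measureReal_mul_integral_cond {E : Type*} [NormedAddCommGroup E]
    [NormedSpace ℝ E] {μ : Measure Ω} {A : Set Ω} (hA : μ A ≠ ∞) (g : Ω → E) :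
    ∫ ω in A, g ω ∂μ = μ.real A • ∫ ω, g ω ∂(μ[|A]) := by
  by_cases hA0 : μ A = 0
  · simp [Measure.restrict_eq_zero.mpr hA0, measureReal_def, hA0]
  · rw [ProbabilityTheory.cond, integral_smul_measure, smul_smul, ENNReal.toReal_inv,
      measureReal_def, mul_inv_cancel₀ (ENNReal.toReal_ne_zero.mpr ⟨hA0, hA⟩), one_smul]

lemma setIntegral_mul_div_cond_eq_of_indepFun {μ : Measure Ω} {A : Set Ω} {T Y : Ω → ℝ}
    (hA : μ A ≠ ∞) (hind : IndepFun T Y (μ[|A])) (hT : Measurable T)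
    (hT01 : ∀ ω, T ω = 0 ∨ T ω = 1) (hY : Measurable Y)
    (hpos : (μ[|A]).real {ω | T ω = 1} ≠ 0) :
    ∫ ω in A, T ω * Y ω / (μ[|A]).real {ω | T ω = 1} ∂μ = ∫ ω in A, Y ω ∂μ := by
  rw [setIntegral_eq_measureReal_mul_integral_cond hA,
    setIntegral_eq_measureReal_mul_integral_cond hA,
    integral_mul_div_measureReal_eq_of_indepFun hind hT hT01 hY.aestronglyMeasurable hpos]

lemma integral_eq_sum_setIntegral_fiber {E : Type*} [NormedAddCommGroup E] [NormedSpace ℝ E]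
    {α : Type*} [Fintype α] [MeasurableSpace α] [MeasurableSingletonClass α] {μ : Measure Ω}
    {X : Ω → α} (hX : Measurable X) {g : Ω → E}
    (hg : ∀ x, IntegrableOn g {ω | X ω = x} μ) :
    ∫ ω, g ω ∂μ = ∑ x, ∫ ω in {ω | X ω = x}, g ω ∂μ := by
  have hcover : (⋃ x, {ω | X ω = x}) = Set.univ := by
    ext ω
    simp
  have hdisj : Pairwise (Function.onFun Disjoint fun x => {ω | X ω = x}) :=
    fun x y hxy => Set.disjoint_left.mpr fun ω hx hy => hxy (hx.symm.trans hy)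
  rw [← setIntegral_univ, ← hcover,
    integral_iUnion_fintype (s := fun x => {ω | X ω = x})
      (fun x => hX (measurableSet_singleton x)) hdisj hg]

end

theorem ipw_unbiasedness_general
    {Ω : Type*} [MeasurableSpace Ω] (μ : Measure Ω) [IsProbabilityMeasure μ]
    {XT : Type*} [Fintype XT] [MeasurableSpace XT] [MeasurableSingletonClass XT]
    (X : Ω → XT) (T : Ω → ℝ) (Y0 Y1 : Ω → ℝ)
    (hX : Measurable X) (hT : Measurable T) (hY1 : Measurable Y1)
    (hT01 : ∀ ω, T ω = 0 ∨ T ω = 1)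
    (hY1int : Integrable Y1 μ)
    (Y : Ω → ℝ) (hY : ∀ ω, Y ω = T ω * Y1 ω + (1 - T ω) * Y0 ω)
    -- conditional ignorability: (Y(0), Y(1)) ⫫ T given X = x, for every x of positive probability
    (hignor : ∀ x : XT, μ {ω | X ω = x} ≠ 0 →
      IndepFun (fun ω => (Y0 ω, Y1 ω)) T (μ[|{ω | X ω = x}]))
    -- overlap
    (hoverlap : ∀ x : XT, μ {ω | X ω = x} ≠ 0 →
      0 < μ[|{ω | X ω = x}] {ω | T ω = 1} ∧ μ[|{ω | X ω = x}] {ω | T ω = 1} < 1)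
    -- the propensity score
    (s : XT → ℝ) (hs : ∀ x : XT, s x = (μ[|{ω | X ω = x}] {ω | T ω = 1}).toReal) :
    ∫ ω, T ω * Y ω / s (X ω) ∂μ = ∫ ω, Y1 ω ∂μ := by
  have hstratum : ∀ x, MeasurableSet {ω | X ω = x} := fun x => hX (measurableSet_singleton x)
  have hfiber_eq : ∀ x, ∀ ω ∈ {ω | X ω = x},
      T ω * Y ω / s (X ω) = T ω * Y1 ω / (μ[|{ω | X ω = x}]).real {ω | T ω = 1} := by
    rintro x ω (rfl : X ω = x)
    rw [hs, hY]
    rcases hT01 ω with h | h <;> simp [h, measureReal_def]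
  have hTY1 : Integrable (fun ω => T ω * Y1 ω) μ :=
    hY1int.bdd_mul (c := 1) hT.aestronglyMeasurable
      (.of_forall fun ω => by rcases hT01 ω with h | h <;> simp [h])
  have hfiber_on : ∀ x, IntegrableOn (fun ω => T ω * Y ω / s (X ω)) {ω | X ω = x} μ :=
    fun x => (hTY1.div_const _).integrableOn.congr_fun
      (fun ω hω => (hfiber_eq x ω hω).symm) (hstratum x)
  have hfiber : ∀ x, ∫ ω in {ω | X ω = x}, T ω * Y ω / s (X ω) ∂μ
      = ∫ ω in {ω | X ω = x}, Y1 ω ∂μ := by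
    intro x
    by_cases hx : μ {ω | X ω = x} = 0
    · simp [Measure.restrict_eq_zero.mpr hx]
    rw [setIntegral_congr_fun (hstratum x) (hfiber_eq x)]
    exact setIntegral_mul_div_cond_eq_of_indepFun (measure_ne_top _ _)
      ((hignor x hx).comp measurable_snd measurable_id).symm hT hT01 hY1
      (ENNReal.toReal_pos (hoverlap x hx).1.ne' (measure_ne_top _ _)).ne'
  rw [integral_eq_sum_setIntegral_fiber hX hfiber_on,
    integral_eq_sum_setIntegral_fiber hX fun _ => hY1int.integrableOn]
  exact Finset.sum_congr rfl fun x _ => hfiber x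

/-- Unbiasedness of inverse probability weighting: with observed outcome
`Y := T·Y(1) + (1−T)·Y(0)`, conditional ignorability and overlap for every `x` with
`P(X = x) > 0`, and propensity score `s(x) := P(T = 1 ∣ X = x)`, one has
`E[T·Y / s(X)] = E[Y(1)]`. -/
theorem ipw_unbiasedness
    {Ω : Type*} [MeasurableSpace Ω] (μ : Measure Ω) [IsProbabilityMeasure μ]
    {XT : Type*} [Fintype XT] [MeasurableSpace XT] [MeasurableSingletonClass XT]
    (X : Ω → XT) (T : Ω → ℝ) (Y0 Y1 : Ω → ℝ)
    (hX : Measurable X) (hT : Measurable T) (hY0 : Measurable Y0) (hY1 : Measurable Y1)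
    (hT01 : ∀ ω, T ω = 0 ∨ T ω = 1)
    (hY0int : Integrable Y0 μ) (hY1int : Integrable Y1 μ)
    (Y : Ω → ℝ) (hY : ∀ ω, Y ω = T ω * Y1 ω + (1 - T ω) * Y0 ω)
    -- conditional ignorability: (Y(0), Y(1)) ⫫ T given X = x, for every x of positive probability
    (hignor : ∀ x : XT, μ {ω | X ω = x} ≠ 0 →
      IndepFun (fun ω => (Y0 ω, Y1 ω)) T (μ[|{ω | X ω = x}]))
    -- overlap
    (hoverlap : ∀ x : XT, μ {ω | X ω = x} ≠ 0 →
      0 < μ[|{ω | X ω = x}] {ω | T ω = 1} ∧ μ[|{ω | X ω = x}] {ω | T ω = 1} < 1)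
    -- the propensity score
    (s : XT → ℝ) (hs : ∀ x : XT, s x = (μ[|{ω | X ω = x}] {ω | T ω = 1}).toReal) :
    ∫ ω, T ω * Y ω / s (X ω) ∂μ = ∫ ω, Y1 ω ∂μ :=
  ipw_unbiasedness_general μ X T Y0 Y1 hX hT hY1 hT01 hY1int Y hY hignor hoverlap s hs
end

section
/- Half-sibling regression recovery: Let (Ω, 𝓕, P) be a probability space, let Q and N be random variables with Q independent of N, let X := g(N) and Y := Q + f(N) for measurable functions g and f, with Q and f(N) integrable. If f(N) is recoverable from X in the sense that E[f(N) ∣ X] = f(N) almost surely (e.g., if f(N) is measurable with respect to the σ-algebra generated by X), then Y − E[Y ∣ X] = Q − E[Q] almost surely; i.e., subtracting the regression of Y on X recovers the signal Q up to its constant mean. -/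
open MeasureTheory ProbabilityTheory

/-! Conditioning on `X` is linear, fixes `f(N)` by assumption, and replaces `Q` by its mean
because `Q` is independent of `X = g(N)`. -/

namespace ProbabilityTheory

variable {Ω γ : Type*} [MeasurableSpace Ω] [MeasurableSpace γ] {μ : Measure Ω}
  [IsProbabilityMeasure μ]

theorem IndepFun.condExp_comap_ae_eq_integral {Q : Ω → ℝ} {X : Ω → γ}
    (hQ : Measurable Q) (hX : Measurable X) (hindep : IndepFun Q X μ) :
    μ[Q | MeasurableSpace.comap X inferInstance] =ᵐ[μ] fun _ => ∫ ω, Q ω ∂μ :=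
  condExp_indep_eq hQ.comap_le hX.comap_le
    (measurable_iff_comap_le.mpr le_rfl).stronglyMeasurable hindep

theorem sub_condExp_add_ae_eq_sub_integral {Q Z : Ω → ℝ} {X : Ω → γ}
    (hQ : Measurable Q) (hX : Measurable X) (hindep : IndepFun Q X μ)
    (hQint : Integrable Q μ)
    (hZ : μ[Z | MeasurableSpace.comap X inferInstance] =ᵐ[μ] Z) :
    Q + Z - μ[Q + Z | MeasurableSpace.comap X inferInstance]
      =ᵐ[μ] fun ω => Q ω - ∫ ω', Q ω' ∂μ := by
  have hZint : Integrable Z μ := integrable_condExp.congr hZ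
  filter_upwards [condExp_add hQint hZint (MeasurableSpace.comap X inferInstance),
    hindep.condExp_comap_ae_eq_integral hQ hX, hZ] with ω hadd hQω hZω
  simp only [Pi.sub_apply, Pi.add_apply, hadd, hQω, hZω]
  ring

end ProbabilityTheory

theorem half_sibling_regression_general
    {Ω : Type*} [MeasurableSpace Ω] (μ : Measure Ω) [IsProbabilityMeasure μ]
    {β γ : Type*} [MeasurableSpace β] [MeasurableSpace γ]
    (Q : Ω → ℝ) (N : Ω → β) (hQ : Measurable Q) (hN : Measurable N)
    (hindep : IndepFun Q N μ)
    (g : β → γ) (f : β → ℝ) (hg : Measurable g)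
    (X : Ω → γ) (Y : Ω → ℝ)
    (hX : ∀ ω, X ω = g (N ω)) (hY : ∀ ω, Y ω = Q ω + f (N ω))
    (hQint : Integrable Q μ)
    -- `f(N)` is recoverable from `X`
    (hrecover : μ[(fun ω => f (N ω)) | MeasurableSpace.comap X inferInstance]
        =ᵐ[μ] fun ω => f (N ω)) :
    (fun ω => Y ω - (μ[Y | MeasurableSpace.comap X inferInstance]) ω)
      =ᵐ[μ] fun ω => Q ω - ∫ ω', Q ω' ∂μ := by
  obtain rfl : X = fun ω => g (N ω) := funext hX
  obtain rfl : Y = Q + fun ω => f (N ω) := funext hY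
  exact sub_condExp_add_ae_eq_sub_integral hQ (hg.comp hN) (hindep.comp measurable_id hg)
    hQint hrecover

/-- Half-sibling regression recovery: if `Q ⫫ N`, `X := g(N)`, `Y := Q + f(N)`, and
`E[f(N) ∣ X] = f(N)` a.s., then `Y − E[Y ∣ X] = Q − E[Q]` a.s.: subtracting the regression of
`Y` on `X` recovers the signal `Q` up to its constant mean. -/
theorem half_sibling_regression
    {Ω : Type*} [MeasurableSpace Ω] (μ : Measure Ω) [IsProbabilityMeasure μ]
    {β γ : Type*} [MeasurableSpace β] [MeasurableSpace γ]
    (Q : Ω → ℝ) (N : Ω → β) (hQ : Measurable Q) (hN : Measurable N)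
    (hindep : IndepFun Q N μ)
    (g : β → γ) (f : β → ℝ) (hg : Measurable g) (hf : Measurable f)
    (X : Ω → γ) (Y : Ω → ℝ)
    (hX : ∀ ω, X ω = g (N ω)) (hY : ∀ ω, Y ω = Q ω + f (N ω))
    (hQint : Integrable Q μ) (hfNint : Integrable (fun ω => f (N ω)) μ)
    -- `f(N)` is recoverable from `X`
    (hrecover : μ[(fun ω => f (N ω)) | MeasurableSpace.comap X inferInstance]
        =ᵐ[μ] fun ω => f (N ω)) :
    (fun ω => Y ω - (μ[Y | MeasurableSpace.comap X inferInstance]) ω)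
      =ᵐ[μ] fun ω => Q ω - ∫ ω', Q ω' ∂μ :=
  half_sibling_regression_general μ Q N hQ hN hindep g f hg X Y hX hY hQint hrecover
end

section
/- Information-geometric causal inference asymmetry: Let f : [0,1] → [0,1] be a continuously differentiable, strictly increasing bijection with f(0) = 0, f(1) = 1, and f'(x) > 0 for all x, and let p be a probability density on [0,1]. Let p_Y be the density of the pushforward of p under f, i.e., p_Y(y) = p(f⁻¹(y)) · (f⁻¹)'(y). If ∫₀¹ p(x) log f'(x) dx = ∫₀¹ log f'(x) dx (independence of the cause distribution p and the mechanism f in the sense of zero covariance of p and log f' with respect to Lebesgue measure), then ∫₀¹ p_Y(y) log (f⁻¹)'(y) dy ≥ ∫₀¹ log (f⁻¹)'(y) dy, with strict inequality whenever f is not the identity. -/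
open MeasureTheory

/-- Information-geometric causal inference asymmetry: for a continuously differentiable,
strictly increasing bijection `f` of `[0,1]` with positive derivative and a density `p` on
`[0,1]`, if `∫ p log f' = ∫ log f'` (independence of cause distribution and mechanism), then
for the pushforward density `p_Y(y) = p(f⁻¹(y))·(f⁻¹)'(y)` one has
`∫ p_Y log (f⁻¹)' ≥ ∫ log (f⁻¹)'`, strictly unless `f` is the identity. -/
theorem igci_asymmetry
    (f f' g g' p pY : ℝ → ℝ)
    (hderiv : ∀ x ∈ Set.Icc (0 : ℝ) 1, HasDerivAt f (f' x) x)
    (hf'cont : ContinuousOn f' (Set.Icc 0 1))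
    (hf'pos : ∀ x ∈ Set.Icc (0 : ℝ) 1, 0 < f' x)
    (hmono : StrictMonoOn f (Set.Icc 0 1))
    (hbij : Set.BijOn f (Set.Icc 0 1) (Set.Icc 0 1))
    (hf0 : f 0 = 0) (hf1 : f 1 = 1)
    -- `g` is the inverse of `f` on `[0,1]`, with derivative `g'`
    (hgf : ∀ x ∈ Set.Icc (0 : ℝ) 1, g (f x) = x)
    (hfg : ∀ y ∈ Set.Icc (0 : ℝ) 1, f (g y) = y)
    (hgderiv : ∀ y ∈ Set.Icc (0 : ℝ) 1, HasDerivAt g (g' y) y)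
    -- `p` is a probability density on `[0,1]`
    (hpcont : ContinuousOn p (Set.Icc 0 1))
    (hpnonneg : ∀ x ∈ Set.Icc (0 : ℝ) 1, 0 ≤ p x)
    (hpint : ∫ x in (0 : ℝ)..1, p x = 1)
    -- `pY` is the density of the pushforward of `p` under `f`
    (hpY : ∀ y ∈ Set.Icc (0 : ℝ) 1, pY y = p (g y) * g' y)
    -- independence of cause distribution and mechanism
    (hICM : ∫ x in (0 : ℝ)..1, p x * Real.log (f' x) = ∫ x in (0 : ℝ)..1, Real.log (f' x)) :
    (∫ y in (0 : ℝ)..1, Real.log (g' y)) ≤ (∫ y in (0 : ℝ)..1, pY y * Real.log (g' y)) ∧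
    ((∃ x ∈ Set.Icc (0 : ℝ) 1, f x ≠ x) →
      (∫ y in (0 : ℝ)..1, Real.log (g' y)) < ∫ y in (0 : ℝ)..1, pY y * Real.log (g' y)) := by
  have h01 : (0:ℝ) ≤ 1 := by norm_num
  have huIcc : Set.uIcc (0:ℝ) 1 = Set.Icc 0 1 := Set.uIcc_of_le h01
  have hgmem : Set.MapsTo g (Set.Icc (0:ℝ) 1) (Set.Icc 0 1) := by
    intro y hy
    obtain ⟨x, hx, hfx⟩ := hbij.surjOn hy
    rw [← hfx, hgf x hx]; exact hx
  have hgcont : ContinuousOn g (Set.Icc 0 1) := fun y hy =>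
    (hgderiv y hy).continuousAt.continuousWithinAt
  have hfcont : ContinuousOn f (Set.Icc 0 1) := fun x hx =>
    (hderiv x hx).continuousAt.continuousWithinAt
  have hUD : UniqueDiffOn ℝ (Set.Icc (0:ℝ) 1) := uniqueDiffOn_Icc (by norm_num)
  -- g' y = (f' (g y))⁻¹ on [0,1]
  have hg'eq : ∀ y ∈ Set.Icc (0:ℝ) 1, g' y = (f' (g y))⁻¹ := by
    intro y hy
    have hx := hgmem hy
    have h1 : HasDerivWithinAt (f ∘ g) (f' (g y) * g' y) (Set.Icc 0 1) y :=
      HasDerivWithinAt.comp y ((hderiv _ hx).hasDerivWithinAt)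
        ((hgderiv y hy).hasDerivWithinAt) hgmem
    have h2 : HasDerivWithinAt (f ∘ g) 1 (Set.Icc 0 1) y :=
      ((hasDerivAt_id y).hasDerivWithinAt).congr (fun z hz => (hfg z hz)) (hfg y hy)
    have he : f' (g y) * g' y = 1 := by
      have e1 := h1.derivWithin (hUD y hy)
      have e2 := h2.derivWithin (hUD y hy)
      rw [e1] at e2; exact e2
    have hne : f' (g y) ≠ 0 := (hf'pos _ hx).ne'
    field_simp at he ⊢
    linarith [he]
  -- substitution lemma
  have hsub : ∀ h : ℝ → ℝ, ContinuousOn h (Set.Icc 0 1) →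
      (∫ y in (0:ℝ)..1, h y) = ∫ x in (0:ℝ)..1, f' x * h (f x) := by
    intro h hh
    have himg : f '' Set.uIcc (0:ℝ) 1 = Set.Icc 0 1 := by rw [huIcc, hbij.image_eq]
    have := intervalIntegral.integral_comp_smul_deriv' (a := 0) (b := 1)
      (fun x hx => hderiv x (huIcc ▸ hx)) (huIcc ▸ hf'cont) (himg ▸ hh)
    rw [hf0, hf1] at this
    simpa [smul_eq_mul, Function.comp] using this.symm
  -- continuity facts
  have hf'gcont : ContinuousOn (fun y => f' (g y)) (Set.Icc (0:ℝ) 1) :=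
    hf'cont.comp hgcont hgmem
  have hf'gne : ∀ y ∈ Set.Icc (0:ℝ) 1, f' (g y) ≠ 0 := fun y hy => (hf'pos _ (hgmem hy)).ne'
  have hlogg'cont : ContinuousOn (fun y => Real.log (g' y)) (Set.Icc (0:ℝ) 1) := by
    apply ContinuousOn.congr (f := fun y => Real.log ((f' (g y))⁻¹))
    · exact (hf'gcont.inv₀ hf'gne).log (fun y hy => inv_ne_zero (hf'gne y hy))
    · intro y hy
      show Real.log (g' y) = Real.log ((f' (g y))⁻¹)
      rw [hg'eq y hy]
  have hpYlogcont : ContinuousOn (fun y => pY y * Real.log (g' y)) (Set.Icc (0:ℝ) 1) := by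
    apply ContinuousOn.congr
      (f := fun y => (p (g y) * (f' (g y))⁻¹) * Real.log ((f' (g y))⁻¹))
    · exact ((hpcont.comp hgcont hgmem).mul (hf'gcont.inv₀ hf'gne)).mul
        ((hf'gcont.inv₀ hf'gne).log (fun y hy => inv_ne_zero (hf'gne y hy)))
    · intro y hy
      show pY y * Real.log (g' y) = p (g y) * (f' (g y))⁻¹ * Real.log ((f' (g y))⁻¹)
      rw [hpY y hy, hg'eq y hy]
  -- rewrite both integrals
  have key1 : (∫ y in (0:ℝ)..1, Real.log (g' y)) = ∫ x in (0:ℝ)..1, -(f' x * Real.log (f' x)) := by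
    rw [hsub _ hlogg'cont]
    apply intervalIntegral.integral_congr
    intro x hx
    rw [huIcc] at hx
    have hfx : f x ∈ Set.Icc (0:ℝ) 1 := hbij.mapsTo hx
    show f' x * Real.log (g' (f x)) = -(f' x * Real.log (f' x))
    rw [hg'eq _ hfx, hgf x hx, Real.log_inv]
    ring
  have key2 : (∫ y in (0:ℝ)..1, pY y * Real.log (g' y))
      = ∫ x in (0:ℝ)..1, -(p x * Real.log (f' x)) := by
    rw [hsub _ hpYlogcont]
    apply intervalIntegral.integral_congr
    intro x hx
    rw [huIcc] at hx
    have hfx : f x ∈ Set.Icc (0:ℝ) 1 := hbij.mapsTo hx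
    have hne : f' x ≠ 0 := (hf'pos x hx).ne'
    show f' x * (pY (f x) * Real.log (g' (f x))) = -(p x * Real.log (f' x))
    rw [hpY _ hfx, hg'eq _ hfx, hgf x hx, Real.log_inv]
    field_simp
  have keyICM : (∫ x in (0:ℝ)..1, -(p x * Real.log (f' x)))
      = ∫ x in (0:ℝ)..1, -(Real.log (f' x)) := by
    rw [intervalIntegral.integral_neg, intervalIntegral.integral_neg, hICM]
  -- the deficit function D
  set D : ℝ → ℝ := fun x => (f' x - 1) * Real.log (f' x) with hD
  have hDcont : ContinuousOn D (Set.Icc (0:ℝ) 1) := by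
    exact (hf'cont.sub continuousOn_const).mul
      (hf'cont.log (fun x hx => (hf'pos x hx).ne'))
  have hDnonneg : ∀ x ∈ Set.Icc (0:ℝ) 1, 0 ≤ D x := by
    intro x hx
    show 0 ≤ (f' x - 1) * Real.log (f' x)
    rcases le_or_gt 1 (f' x) with h | h
    · exact mul_nonneg (by linarith) (Real.log_nonneg h)
    · nlinarith [Real.log_nonpos (hf'pos x hx).le h.le]
  have hDint : IntervalIntegrable D volume 0 1 :=
    (huIcc ▸ hDcont).intervalIntegrable
  have hf'logint : IntervalIntegrable (fun x => f' x * Real.log (f' x)) volume 0 1 := by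
    apply ContinuousOn.intervalIntegrable
    rw [huIcc]
    exact hf'cont.mul (hf'cont.log (fun x hx => (hf'pos x hx).ne'))
  have hlogint : IntervalIntegrable (fun x => Real.log (f' x)) volume 0 1 := by
    apply ContinuousOn.intervalIntegrable
    rw [huIcc]
    exact hf'cont.log (fun x hx => (hf'pos x hx).ne')
  have hsplit : (∫ x in (0:ℝ)..1, f' x * Real.log (f' x)) - (∫ x in (0:ℝ)..1, Real.log (f' x))
      = ∫ x in (0:ℝ)..1, D x := by
    rw [← intervalIntegral.integral_sub hf'logint hlogint]
    apply intervalIntegral.integral_congr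
    intro x hx
    simp only [hD]; ring
  have hmain : ∀ c : ℝ, (0 < c → (∫ x in (0:ℝ)..1, D x) = c →
      (∫ y in (0:ℝ)..1, Real.log (g' y)) < ∫ y in (0:ℝ)..1, pY y * Real.log (g' y)) := by
    intro c hc hceq
    rw [key1, key2, keyICM, intervalIntegral.integral_neg, intervalIntegral.integral_neg]
    have : (∫ x in (0:ℝ)..1, Real.log (f' x)) < ∫ x in (0:ℝ)..1, f' x * Real.log (f' x) := by
      nlinarith [hsplit, hceq]
    linarith
  constructor
  · rw [key1, key2, keyICM, intervalIntegral.integral_neg, intervalIntegral.integral_neg]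
    have h0 : 0 ≤ ∫ x in (0:ℝ)..1, D x := by
      apply intervalIntegral.integral_nonneg h01
      intro x hx; exact hDnonneg x hx
    linarith [hsplit]
  · rintro ⟨x₀, hx₀, hfx₀⟩
    -- find x₁ with D x₁ > 0
    have hx₁ : ∃ x₁ ∈ Set.Icc (0:ℝ) 1, 0 < D x₁ := by
      by_contra hcon
      push_neg at hcon
      have hDzero : ∀ x ∈ Set.Icc (0:ℝ) 1, D x = 0 := fun x hx =>
        le_antisymm (hcon x hx) (hDnonneg x hx)
      have hf'one : ∀ x ∈ Set.Icc (0:ℝ) 1, f' x = 1 := by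
        intro x hx
        by_contra hne
        have hlogne : Real.log (f' x) ≠ 0 := by
          intro h
          rcases Real.log_eq_zero.mp h with h' | h' | h' <;>
            [exact absurd h' (hf'pos x hx).ne'; exact hne h';
             linarith [hf'pos x hx]]
        have := hDzero x hx
        simp only [hD] at this
        rcases mul_eq_zero.mp this with h' | h'
        · exact hne (by linarith)
        · exact hlogne h'
      -- then f = id on [0,1]
      have : f x₀ = x₀ := by
        have hsubI : Set.uIcc (0:ℝ) x₀ ⊆ Set.Icc 0 1 := by
          rw [Set.uIcc_of_le hx₀.1]
          exact Set.Icc_subset_Icc le_rfl hx₀.2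
        have hFTC := intervalIntegral.integral_eq_sub_of_hasDerivAt
          (f := f) (f' := f') (a := 0) (b := x₀)
          (fun x hx => hderiv x (hsubI hx))
          ((hf'cont.mono hsubI).intervalIntegrable)
        have hone : (∫ x in (0:ℝ)..x₀, f' x) = x₀ := by
          rw [intervalIntegral.integral_congr (g := fun _ => (1:ℝ))
            (fun x hx => hf'one x (hsubI hx))]
          simp
        rw [hone, hf0, sub_zero] at hFTC
        exact hFTC.symm
      exact hfx₀ this
    obtain ⟨x₁, hx₁mem, hDx₁⟩ := hx₁
    -- strict positivity of ∫ D
    have hpos : 0 < ∫ x in (0:ℝ)..1, D x := by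
      have hcw : ContinuousWithinAt D (Set.Icc (0:ℝ) 1) x₁ := hDcont x₁ hx₁mem
      have hev : ∀ᶠ z in nhdsWithin x₁ (Set.Icc (0:ℝ) 1), 0 < D z :=
        hcw.eventually_const_lt hDx₁
      obtain ⟨U, hUopen, hx₁U, hU⟩ := mem_nhdsWithin.mp hev
      have hclo : x₁ ∈ closure (Set.Ioo (0:ℝ) 1) := by
        rw [closure_Ioo (by norm_num : (0:ℝ) ≠ 1)]
        exact hx₁mem
      have hne : (U ∩ Set.Ioo (0:ℝ) 1).Nonempty := by
        rcases mem_closure_iff.mp hclo U hUopen hx₁U with ⟨z, hz⟩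
        exact ⟨z, hz⟩
      have hmeas : 0 < volume (U ∩ Set.Ioo (0:ℝ) 1) :=
        (hUopen.inter isOpen_Ioo).measure_pos volume hne
      have hsupp : U ∩ Set.Ioo (0:ℝ) 1 ⊆ Function.support D ∩ Set.Ioc 0 1 := by
        rintro z ⟨hzU, hzI⟩
        refine ⟨Function.mem_support.mpr ?_, Set.Ioo_subset_Ioc_self hzI⟩
        exact (hU ⟨hzU, Set.Ioo_subset_Icc_self hzI⟩).ne'
      have hae : 0 ≤ᵐ[volume.restrict (Set.uIoc (0:ℝ) 1)] D := by
        rw [Set.uIoc_of_le h01]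
        filter_upwards [ae_restrict_mem measurableSet_Ioc] with z hz
        exact hDnonneg z (Set.Ioc_subset_Icc_self hz)
      rw [intervalIntegral.integral_pos_iff_support_of_nonneg_ae' hae hDint]
      exact ⟨by norm_num, hmeas.trans_le (measure_mono hsupp)⟩
    exact hmain _ hpos rfl
end

section
/- Polynomial kernel mean embeddings match iff moments match: Let x₁, …, x_m and y₁, …, y_n be points in ℝ^p and d ≥ 1 an integer. Then (1/m) Σᵢ (⟨xᵢ, z⟩ + 1)^d = (1/n) Σⱼ (⟨yⱼ, z⟩ + 1)^d holds for all z ∈ ℝ^p if and only if for every multi-index α ∈ ℕ^p with |α| ≤ d the empirical moments coincide: (1/m) Σᵢ xᵢ^α = (1/n) Σⱼ yⱼ^α (where xᵢ^α denotes the product of the coordinates of xᵢ raised to the powers α). -/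
/-!
Both sides of the kernel identity are polynomial functions of `z`, and over an infinite domain
such functions agree iff their coefficients do. By the binomial and multinomial theorems the
coefficient of `z^α` in `(⟨a, z⟩ + 1) ^ d` is `(d choose |α|) · multinomial(α) · a^α` when
`|α| ≤ d` and `0` otherwise; since these integer factors are nonzero, matching coefficients of
the two mean embeddings is matching the empirical moments of degree at most `d`.
-/

open Finsupp MvPolynomial

namespace MvPolynomial

variable {R σ ι : Type*} [Fintype σ] [Fintype ι]

section CommSemiring

variable [CommSemiring R]

lemma coeff_linearCombination_X_add_one_pow (a : σ → R) (s : σ →₀ ℕ) (d : ℕ) :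
    coeff s ((∑ k, a k • X k + 1 : MvPolynomial σ R) ^ d) =
      if s.degree ≤ d then
        (d.choose s.degree * s.multinomial : R) * s.prod (fun k m ↦ a k ^ m)
      else 0 := by
  simp only [add_pow, one_pow, mul_one, coeff_sum, ← C_eq_coe_nat, mul_comm _ (C _), coeff_C_mul,
    coeff_linearCombination_X_pow_of_fintype, mul_ite, mul_zero]
  rw [show s.sum (fun _ m ↦ m) = s.degree from rfl, Finset.sum_ite_eq]
  simp only [Finset.mem_range, Nat.lt_succ_iff]
  split_ifs <;> ring

/-- The kernel mean embedding `c • ∑ᵢ k(xᵢ, ·)` of the sample `x` for the polynomial kernel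
`k(a, z) = (⟨a, z⟩ + 1) ^ d`, as a polynomial in `z`. -/
noncomputable def polyKernelMean (c : R) (x : ι → σ → R) (d : ℕ) : MvPolynomial σ R :=
  C c * ∑ i, (∑ k, x i k • X k + 1) ^ d

lemma eval_polyKernelMean (c : R) (x : ι → σ → R) (d : ℕ) (z : σ → R) :
    eval z (polyKernelMean c x d) = c * ∑ i, (∑ k, x i k * z k + 1) ^ d := by
  simp [polyKernelMean]

lemma coeff_polyKernelMean (c : R) (x : ι → σ → R) (d : ℕ) (s : σ →₀ ℕ) :
    coeff s (polyKernelMean c x d) =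
      if s.degree ≤ d then
        (d.choose s.degree * s.multinomial : R) * (c * ∑ i, s.prod fun k m ↦ x i k ^ m)
      else 0 := by
  simp only [polyKernelMean, coeff_C_mul, coeff_sum, coeff_linearCombination_X_add_one_pow]
  split_ifs <;> simp [Finset.mul_sum, mul_left_comm]

end CommSemiring

theorem polyKernelMean_eq_iff {κ : Type*} [Fintype κ] [CommRing R] [IsDomain R] [CharZero R]
    (c : R) (x : ι → σ → R) (c' : R) (y : κ → σ → R) (d : ℕ) :
    polyKernelMean c x d = polyKernelMean c' y d ↔
      ∀ s : σ →₀ ℕ, s.degree ≤ d →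
        c * ∑ i, s.prod (fun k m ↦ x i k ^ m) = c' * ∑ j, s.prod (fun k m ↦ y j k ^ m) := by
  refine MvPolynomial.ext_iff.trans (forall_congr' fun s ↦ ?_)
  rw [coeff_polyKernelMean, coeff_polyKernelMean]
  split_ifs with hs
  · have hcoeff : 0 < d.choose s.degree * s.multinomial :=
      Nat.mul_pos (Nat.choose_pos hs) (Nat.multinomial_pos _ _)
    rw [mul_right_inj' (by exact_mod_cast hcoeff.ne'), imp_iff_right hs]
  · simp only [hs, false_imp_iff]

end MvPolynomial

theorem polynomial_kernel_mean_embedding_moments_general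
    (p : ℕ) (m n : ℕ) (d : ℕ)
    (x : Fin m → (Fin p → ℝ)) (y : Fin n → (Fin p → ℝ)) :
    (∀ z : Fin p → ℝ,
        (1 / m : ℝ) * ∑ i, ((∑ k, x i k * z k) + 1) ^ d
          = (1 / n : ℝ) * ∑ j, ((∑ k, y j k * z k) + 1) ^ d)
      ↔ (∀ α : Fin p → ℕ, (∑ k, α k) ≤ d →
        (1 / m : ℝ) * ∑ i, ∏ k, x i k ^ α k
          = (1 / n : ℝ) * ∑ j, ∏ k, y j k ^ α k) := by
  simp only [← eval_polyKernelMean, ← MvPolynomial.funext_iff, polyKernelMean_eq_iff]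
  refine equivFunOnFinite.forall_congr fun s ↦ ?_
  simp only [degree_eq_sum, prod_fintype _ _ (fun _ ↦ pow_zero _), equivFunOnFinite_apply]

/-- Polynomial kernel mean embeddings match iff empirical moments up to degree `d` match:
for samples `x₁, …, x_m` and `y₁, …, y_n` in `ℝ^p`,
`(1/m) Σᵢ (⟨xᵢ, z⟩ + 1)^d = (1/n) Σⱼ (⟨yⱼ, z⟩ + 1)^d` for all `z` iff all empirical moments
of multi-degree `|α| ≤ d` coincide. -/
theorem polynomial_kernel_mean_embedding_moments
    (p : ℕ) (m n : ℕ) (hm : 0 < m) (hn : 0 < n) (d : ℕ) (hd : 1 ≤ d)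
    (x : Fin m → (Fin p → ℝ)) (y : Fin n → (Fin p → ℝ)) :
    (∀ z : Fin p → ℝ,
        (1 / m : ℝ) * ∑ i, ((∑ k, x i k * z k) + 1) ^ d
          = (1 / n : ℝ) * ∑ j, ((∑ k, y j k * z k) + 1) ^ d)
      ↔ (∀ α : Fin p → ℕ, (∑ k, α k) ≤ d →
        (1 / m : ℝ) * ∑ i, ∏ k, x i k ^ α k
          = (1 / n : ℝ) * ∑ j, ∏ k, y j k ^ α k) :=
  polynomial_kernel_mean_embedding_moments_general p m n d x y
end

section
/- Robinson's recursion for counting DAGs: For n ≥ 0, let a(n) denote the number of directed acyclic graphs on the labeled vertex set {1, …, n}, i.e., the number of irreflexive relations r on Fin n admitting no directed cycle (equivalently, whose transitive closure is irreflexive). Then a(0) = 1 and for n ≥ 1, a(n) = Σ_{k=1}^{n} (−1)^{k+1} · C(n, k) · 2^{k(n−k)} · a(n−k). In particular a(5) = 29281. -/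
/-- The number of directed acyclic graphs on the labeled vertex set `{1, …, n}`: irreflexive
relations on `Fin n` with no directed cycle (i.e., whose transitive closure is irreflexive). -/
noncomputable def numDAGs (n : ℕ) : ℕ :=
  Nat.card {r : Fin n → Fin n → Bool //
    (∀ v, r v v = false) ∧ ∀ v, ¬ Relation.TransGen (fun i j => r i j = true) v v}

/-!
Every nonempty finite DAG has a sink. If `S` is a set of `k` vertices, a DAG in which every vertex
of `S` is a sink is the same as an arbitrary set of edges from the other `n - k` vertices into `S`
together with a DAG on those `n - k` vertices, so there are `2 ^ (k * (n - k)) * a (n - k)` of them.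
Inclusion–exclusion over the sets of sinks, together with the absence of sinkless DAGs, gives the
recursion; `a 5` is then computed from it.
-/

open Finset Relation

section

variable {α β : Type*}

def IsDAG (r : α → α → Bool) : Prop :=
  (∀ v, r v v = false) ∧ ∀ v, ¬ TransGen (fun i j => r i j = true) v v

def IsSink (r : α → α → Bool) (v : α) : Prop :=
  ∀ w, r v w = false

theorem IsDAG.comap {r : α → α → Bool} (h : IsDAG r) (f : β → α) :
    IsDAG (fun a b => r (f a) (f b)) :=
  ⟨fun v => h.1 (f v), fun v hv => h.2 (f v) (hv.lift f fun _ _ => id)⟩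

theorem IsDAG.exists_isSink [Finite α] [Nonempty α] {r : α → α → Bool} (h : IsDAG r) :
    ∃ v, IsSink r v := by
  let below : α → α → Prop := fun a b => TransGen (fun i j => r i j = true) b a
  have : IsTrans α below := ⟨fun _ _ _ hab hbc => hbc.trans hab⟩
  have : Std.Irrefl below := ⟨h.2⟩
  obtain ⟨v, -, hv⟩ :=
    (Finite.wellFounded_of_trans_of_irrefl below).has_min Set.univ Set.univ_nonempty
  exact ⟨v, fun w => Bool.eq_false_iff.2 fun hvw => hv w trivial (TransGen.single hvw)⟩

noncomputable def dagCount (α : Type*) : ℕ :=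
  Nat.card {r : α → α → Bool // IsDAG r}

theorem numDAGs_eq_dagCount (n : ℕ) : numDAGs n = dagCount (Fin n) := rfl

def dagEquivCongr (e : α ≃ β) :
    {r : α → α → Bool // IsDAG r} ≃ {r : β → β → Bool // IsDAG r} where
  toFun r := ⟨fun a b => r.1 (e.symm a) (e.symm b), r.2.comap e.symm⟩
  invFun r := ⟨fun a b => r.1 (e a) (e b), r.2.comap e⟩
  left_inv r := by ext; simp
  right_inv r := by ext; simp

theorem dagCount_congr (e : α ≃ β) : dagCount α = dagCount β :=
  Nat.card_congr (dagEquivCongr e)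

theorem transGen_subtype_of_source_mem {p : α → Prop} {r : α → α → Prop}
    (hp : ∀ a b, r a b → p a) {a b : α} (h : TransGen r a b) (ha : p a) (hb : p b) :
    TransGen (fun x y : Subtype p => r x y) ⟨a, ha⟩ ⟨b, hb⟩ := by
  induction h with
  | single hab => exact TransGen.single hab
  | @tail b c _ hbc ih => exact (ih (hp b c hbc)).tail hbc

variable [DecidableEq α] (S : Finset α)

def extendBySinks (f : {x // x ∉ S} → {x // x ∈ S} → Bool)
    (r' : {x // x ∉ S} → {x // x ∉ S} → Bool) (v w : α) : Bool :=
  if hv : v ∈ S then false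
  else if hw : w ∈ S then f ⟨v, hv⟩ ⟨w, hw⟩ else r' ⟨v, hv⟩ ⟨w, hw⟩

theorem isSink_extendBySinks (f : {x // x ∉ S} → {x // x ∈ S} → Bool)
    (r' : {x // x ∉ S} → {x // x ∉ S} → Bool) {v : α} (hv : v ∈ S) :
    IsSink (extendBySinks S f r') v :=
  fun _ => dif_pos hv

theorem isDAG_extendBySinks (f : {x // x ∉ S} → {x // x ∈ S} → Bool)
    {r' : {x // x ∉ S} → {x // x ∉ S} → Bool} (h : IsDAG r') :
    IsDAG (extendBySinks S f r') := by
  set r := extendBySinks S f r'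
  have source_not_mem : ∀ a b, r a b = true → a ∉ S := fun a b hab ha => by
    simp [isSink_extendBySinks S f r' ha b, r] at hab
  refine ⟨fun v => ?_, fun v hv => ?_⟩
  · by_cases hv : v ∈ S
    · exact isSink_extendBySinks S f r' hv v
    · simpa [r, extendBySinks, hv] using h.1 ⟨v, hv⟩
  · obtain ⟨w, hvw, -⟩ := TransGen.head'_iff.mp hv
    have hvS : v ∉ S := source_not_mem v w hvw
    refine h.2 ⟨v, hvS⟩ ((transGen_subtype_of_source_mem source_not_mem hv hvS hvS).lift id ?_)
    intro a b hab
    simpa [Function.onFun, r, extendBySinks, a.2, b.2] using hab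

def sinksDAGEquiv : {r : α → α → Bool // IsDAG r ∧ ∀ v ∈ S, IsSink r v} ≃
    ({x // x ∉ S} → {x // x ∈ S} → Bool) × {r' : {x // x ∉ S} → {x // x ∉ S} → Bool // IsDAG r'}
    where
  toFun r := ⟨fun a b => r.1 a b, ⟨fun a b => r.1 a b, r.2.1.comap Subtype.val⟩⟩
  invFun p := ⟨extendBySinks S p.1 p.2.1, isDAG_extendBySinks S p.1 p.2.2,
    fun _ hv => isSink_extendBySinks S p.1 p.2.1 hv⟩
  left_inv := by
    rintro ⟨r, -, hsink⟩
    ext v w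
    by_cases hv : v ∈ S
    · simp [extendBySinks, hv, hsink v hv w]
    · by_cases hw : w ∈ S <;> simp [extendBySinks, hv, hw]
  right_inv := by
    rintro ⟨f, r', -⟩
    ext a b <;> simp [extendBySinks, a.2, b.2]

theorem card_dags_with_sinks [Fintype α] :
    Nat.card {r : α → α → Bool // IsDAG r ∧ ∀ v ∈ S, IsSink r v} =
      2 ^ (#S * (Fintype.card α - #S)) * dagCount (Fin (Fintype.card α - #S)) := by
  have card_compl : Fintype.card {x // x ∉ S} = Fintype.card α - #S := by
    simp [Fintype.card_subtype_compl]
  rw [Nat.card_congr (sinksDAGEquiv S), Nat.card_prod, Nat.card_fun, Nat.card_fun,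
    ← dagCount, dagCount_congr (Fintype.equivFinOfCardEq card_compl)]
  simp [card_compl, ← pow_mul, mul_comm]

end

theorem sum_powerset_neg_one_pow_mul_card_dags_with_sinks {α : Type*} [Fintype α]
    [DecidableEq α] [Nonempty α] :
    ∑ S ∈ (univ : Finset α).powerset,
      (-1 : ℤ) ^ #S * Nat.card {r : α → α → Bool // IsDAG r ∧ ∀ v ∈ S, IsSink r v} = 0 := by
  classical
  let sinkOf (v : α) : Finset {r : α → α → Bool // IsDAG r} := univ.filter (IsSink ·.1 v)
  have card_inf (S : Finset α) :
      #(S.inf sinkOf) = Nat.card {r : α → α → Bool // IsDAG r ∧ ∀ v ∈ S, IsSink r v} := by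
    rw [← Nat.card_congr (Equiv.subtypeSubtypeEquivSubtypeInter IsDAG _),
      Nat.card_eq_fintype_card, Fintype.card_subtype]
    congr 1
    ext r
    simp [sinkOf, mem_inf]
  have no_sinkless : univ.inf (fun v => (sinkOf v)ᶜ) = ∅ := by
    ext r
    simpa [sinkOf, mem_inf] using r.2.exists_isSink
  simpa [no_sinkless, card_inf] using (inclusion_exclusion_card_inf_compl univ sinkOf).symm

theorem numDAGs_eq_sum (n : ℕ) (hn : 1 ≤ n) :
    (numDAGs n : ℤ) = ∑ k ∈ Icc 1 n,
      (-1 : ℤ) ^ (k + 1) * (n.choose k : ℤ) * 2 ^ (k * (n - k)) * (numDAGs (n - k) : ℤ) := by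
  have : NeZero n := ⟨by omega⟩
  have h := sum_powerset_neg_one_pow_mul_card_dags_with_sinks (α := Fin n)
  simp only [card_dags_with_sinks, Fintype.card_fin] at h
  rw [sum_powerset_apply_card (fun k => (-1 : ℤ) ^ k *
      ((2 ^ (k * (n - k)) * dagCount (Fin (n - k)) : ℕ) : ℤ)) (x := univ), card_univ,
    Fintype.card_fin, range_eq_Ico, sum_eq_sum_Ico_succ_bot (by omega)] at h
  simp only [numDAGs_eq_dagCount]
  convert eq_neg_of_add_eq_zero_left h using 1
  · simp
  · rw [← sum_neg_distrib]
    refine sum_congr rfl fun k _ => ?_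
    push_cast
    ring

/-- Robinson's recursion for counting labeled DAGs:
`a(0) = 1`, `a(n) = Σ_{k=1}^n (−1)^{k+1} C(n,k) 2^{k(n−k)} a(n−k)` for `n ≥ 1`, and
in particular `a(5) = 29281`. -/
theorem robinson_dag_recursion :
    numDAGs 0 = 1 ∧
    (∀ n : ℕ, 1 ≤ n →
      (numDAGs n : ℤ) = ∑ k ∈ Finset.Icc 1 n,
        (-1 : ℤ) ^ (k + 1) * (n.choose k : ℤ) * 2 ^ (k * (n - k)) * (numDAGs (n - k) : ℤ)) ∧
    numDAGs 5 = 29281 := by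
  have numDAGs_zero : numDAGs 0 = 1 := by simp [numDAGs]
  refine ⟨numDAGs_zero, numDAGs_eq_sum, ?_⟩
  have : (numDAGs 5 : ℤ) = 29281 := by
    simp [numDAGs_eq_sum, sum_Icc_succ_top, numDAGs_zero, Nat.choose]
  exact_mod_cast this
end
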